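/- arXiv:math/0612578 — 5 statements merged into one kernel-verified Lean document; each statement's English description precedes it below -/
import Mathlib

section
/- Let F be an orientation-preserving homeomorphism of ℝ with F(x+1) = F(x) + d, d ≥ 2, such that F is C^1 and F'(x) ≥ λ > 1 for all x. Then the operator Lφ = F^{-1} ∘ φ ∘ G (for G a homeomorphism with G(x+1)=G(x)+d) has a unique fixed point H in the space of continuous functions with H(x+1) = H(x) + 1, and H satisfies F ∘ H = H ∘ G. -/
/-!
Writing `H = id + ψ`, the equation `f ∘ H ∘ G = H` becomes the fixed point equation of
`ψ ↦ f ∘ (id + ψ) ∘ G - id` on the continuous `1`-periodic functions, a complete space for the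
sup metric. The equivariance `f (y + d) = f y + 1`, `G (x + 1) = G x + d` keeps this operator on
that space, and it is a `K`-contraction whenever `f` is. For `f = F⁻¹` the bound `λ ≤ F'` makes
`F⁻¹` `λ⁻¹`-Lipschitz, so Banach's fixed point theorem gives `H`, and applying `F` to
`F⁻¹ ∘ H ∘ G = H` gives `F ∘ H = H ∘ G`.
-/

open Function Set
open scoped BoundedContinuousFunction NNReal

theorem mul_sub_le_sub_of_forall_hasDerivAt_ge {F : ℝ → ℝ} {lam : ℝ}
    (hF : ∀ x, ∃ D, HasDerivAt F D x ∧ lam ≤ D) ⦃x y : ℝ⦄ (hxy : x ≤ y) :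
    lam * (y - x) ≤ F y - F x := by
  choose D hD hlam using hF
  exact mul_sub_le_image_sub_of_le_deriv (fun x => (hD x).differentiableAt)
    (fun x => (hD x).deriv ▸ hlam x) hxy

theorem contractingWith_of_rightInverse_of_expanding {F Finv : ℝ → ℝ} {lam : ℝ} (hlam : 1 < lam)
    (hF : ∀ ⦃x y⦄, x ≤ y → lam * (y - x) ≤ F y - F x) (hinv : RightInverse Finv F) :
    ContractingWith (Real.toNNReal lam⁻¹) Finv := by
  have hlam0 : 0 < lam := one_pos.trans hlam
  refine ⟨by simpa using inv_lt_one_of_one_lt₀ hlam, LipschitzWith.of_dist_le' fun u v => ?_⟩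
  wlog huv : Finv u ≤ Finv v generalizing u v
  · rw [dist_comm, dist_comm u]
    exact this v u (le_of_not_ge huv)
  have hexp := hF huv
  rw [hinv, hinv] at hexp
  rw [Real.dist_eq, Real.dist_eq, abs_sub_comm, abs_sub_comm u,
    abs_of_nonneg (sub_nonneg.2 huv), le_inv_mul_iff₀ hlam0]
  exact hexp.trans (le_abs_self _)

namespace Function.Periodic

variable {α : Type*} [PseudoMetricSpace α] {g : ℝ → α} {c : ℝ}

noncomputable def toBCF (hg : Periodic g c) (hc : c ≠ 0) (hcont : Continuous g) : ℝ →ᵇ α :=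
  ⟨⟨g, hcont⟩, Metric.isBounded_range_iff.1 (hg.isBounded_of_continuous hc hcont)⟩

@[simp]
theorem coe_toBCF (hg : Periodic g c) (hc : c ≠ 0) (hcont : Continuous g) :
    ⇑(hg.toBCF hc hcont) = g :=
  rfl

end Function.Periodic

theorem BoundedContinuousFunction.isClosed_setOf_periodic {α β : Type*} [TopologicalSpace α]
    [Add α] [MetricSpace β] (c : α) : IsClosed {ψ : α →ᵇ β | Periodic ψ c} := by
  simp only [Periodic, ofPred_forall]
  exact isClosed_iInter fun x => isClosed_eq (continuous_eval_const _) (continuous_eval_const _)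

/-- The displacements `H - id` of the continuous lifts `H` of degree one. -/
def degOneDisplacements : Set (ℝ →ᵇ ℝ) := {ψ | Periodic ψ 1}

instance : CompleteSpace degOneDisplacements :=
  (BoundedContinuousFunction.isClosed_setOf_periodic 1).completeSpace_coe

instance : Nonempty degOneDisplacements := ⟨⟨0, fun _ => rfl⟩⟩

theorem exists_degOneDisplacement {H : ℝ → ℝ} (hH : Continuous H)
    (hHper : ∀ x, H (x + 1) = H x + 1) : ∃ ψ : degOneDisplacements, ∀ x, H x = x + ψ.1 x := by
  have hper : Periodic (fun x => H x - x) 1 := fun x => by simp only [hHper]; ring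
  exact ⟨⟨hper.toBCF one_ne_zero (hH.sub continuous_id), hper⟩, fun x => by simp⟩

section SemiconjOp

variable {f G : ℝ → ℝ} {d : ℤ}

theorem periodic_semiconj_sub (hfper : ∀ y, f (y + d) = f y + 1)
    (hGper : ∀ x, G (x + 1) = G x + d) (ψ : degOneDisplacements) :
    Periodic (fun x => f (G x + ψ.1 (G x)) - x) 1 := fun x => by
  have hψ : ψ.1 (G x + d) = ψ.1 (G x) := by simpa using ψ.2.int_mul d (G x)
  simp only [hGper, hψ, add_right_comm _ (d : ℝ), hfper]
  ring

/-- The operator `H ↦ f ∘ H ∘ G`, written for the displacement `ψ = H - id`. -/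
noncomputable def semiconjOp (hf : Continuous f) (hfper : ∀ y, f (y + d) = f y + 1)
    (hG : Continuous G) (hGper : ∀ x, G (x + 1) = G x + d) (ψ : degOneDisplacements) :
    degOneDisplacements :=
  ⟨(periodic_semiconj_sub hfper hGper ψ).toBCF one_ne_zero
    ((hf.comp (hG.add (ψ.1.continuous.comp hG))).sub continuous_id),
   periodic_semiconj_sub hfper hGper ψ⟩

theorem semiconjOp_apply (hf : Continuous f) (hfper : ∀ y, f (y + d) = f y + 1)
    (hG : Continuous G) (hGper : ∀ x, G (x + 1) = G x + d) (ψ : degOneDisplacements) (x : ℝ) :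
    (semiconjOp hf hfper hG hGper ψ).1 x = f (G x + ψ.1 (G x)) - x :=
  rfl

theorem isFixedPt_semiconjOp_iff (hf : Continuous f) (hfper : ∀ y, f (y + d) = f y + 1)
    (hG : Continuous G) (hGper : ∀ x, G (x + 1) = G x + d) {ψ : degOneDisplacements} :
    IsFixedPt (semiconjOp hf hfper hG hGper) ψ ↔ ∀ x, f (G x + ψ.1 (G x)) = x + ψ.1 x := by
  simp only [IsFixedPt, Subtype.ext_iff, BoundedContinuousFunction.ext_iff, semiconjOp_apply,
    sub_eq_iff_eq_add']

theorem contractingWith_semiconjOp {K : ℝ≥0} (hfK : ContractingWith K f)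
    (hfper : ∀ y, f (y + d) = f y + 1) (hG : Continuous G) (hGper : ∀ x, G (x + 1) = G x + d) :
    ContractingWith K (semiconjOp hfK.toLipschitzWith.continuous hfper hG hGper) := by
  refine ⟨hfK.1, LipschitzWith.of_dist_le_mul fun ψ₁ ψ₂ => ?_⟩
  rw [Subtype.dist_eq, Subtype.dist_eq]
  refine (BoundedContinuousFunction.dist_le (by positivity)).2 fun x => ?_
  simp only [semiconjOp_apply, dist_sub_right]
  calc dist (f (G x + ψ₁.1 (G x))) (f (G x + ψ₂.1 (G x)))
      ≤ K * dist (ψ₁.1 (G x)) (ψ₂.1 (G x)) := by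
        simpa using hfK.toLipschitzWith.dist_le_mul (G x + ψ₁.1 (G x)) (G x + ψ₂.1 (G x))
    _ ≤ K * dist ψ₁.1 ψ₂ := by gcongr; exact BoundedContinuousFunction.dist_coe_le_dist _

end SemiconjOp

theorem ContractingWith.existsUnique_degOne_semiconj {f G : ℝ → ℝ} {K : ℝ≥0} {d : ℤ}
    (hf : ContractingWith K f) (hfper : ∀ y, f (y + d) = f y + 1) (hG : Continuous G)
    (hGper : ∀ x, G (x + 1) = G x + d) :
    ∃! H : ℝ → ℝ, Continuous H ∧ (∀ x, H (x + 1) = H x + 1) ∧ ∀ x, f (H (G x)) = H x := by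
  have hT := contractingWith_semiconjOp hf hfper hG hGper
  have hfc := hf.toLipschitzWith.continuous
  set ψ₀ := ContractingWith.fixedPoint _ hT
  have hψ₀ := (isFixedPt_semiconjOp_iff ..).1 (ContractingWith.fixedPoint_isFixedPt hT)
  refine ⟨fun x => x + ψ₀.1 x, ⟨continuous_id.add ψ₀.1.continuous, fun x => ?_, hψ₀⟩, ?_⟩
  · simp only [ψ₀.2 x]; ring
  rintro H ⟨hH, hHper, hHsemiconj⟩
  obtain ⟨ψ, hψ⟩ := exists_degOneDisplacement hH hHper
  have hfix : IsFixedPt (semiconjOp hfc hfper hG hGper) ψ :=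
    (isFixedPt_semiconjOp_iff hfc hfper hG hGper).2 fun x => by rw [← hψ, ← hψ, hHsemiconj]
  funext x
  rw [hψ, ContractingWith.fixedPoint_unique hT hfix]

theorem stmt_1_general (d : ℤ) (lam : ℝ) (hlam : 1 < lam)
    (F Finv G : ℝ → ℝ)
    (hFper : ∀ x, F (x + 1) = F x + d)
    (hFinv₁ : ∀ x, Finv (F x) = x) (hFinv₂ : ∀ x, F (Finv x) = x)
    (hFderiv : ∀ x : ℝ, ∃ D : ℝ, HasDerivAt F D x ∧ lam ≤ D)
    (hGcont : Continuous G)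
    (hGper : ∀ x, G (x + 1) = G x + d) :
    (∃! H : ℝ → ℝ, Continuous H ∧ (∀ x, H (x + 1) = H x + 1) ∧
        ∀ x, Finv (H (G x)) = H x) ∧
    (∀ H : ℝ → ℝ, Continuous H → (∀ x, H (x + 1) = H x + 1) →
        (∀ x, Finv (H (G x)) = H x) → ∀ x, F (H x) = H (G x)) := by
  have hFinv : ContractingWith (Real.toNNReal lam⁻¹) Finv :=
    contractingWith_of_rightInverse_of_expanding hlam
      (mul_sub_le_sub_of_forall_hasDerivAt_ge hFderiv) hFinv₂
  have hFinvper : ∀ y, Finv (y + d) = Finv y + 1 := fun y => by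
    simpa [hFper, hFinv₂] using hFinv₁ (Finv y + 1)
  refine ⟨hFinv.existsUnique_degOne_semiconj hFinvper hGcont hGper, fun H _ _ hH x => ?_⟩
  rw [← hH x, hFinv₂]

/-- The operator `L φ = F⁻¹ ∘ φ ∘ G` has a unique fixed point `H` in the
space of continuous maps with `H(x+1) = H(x)+1`, and `H` satisfies `F ∘ H = H ∘ G`. -/
theorem stmt_1 (d : ℤ) (hd : 2 ≤ d) (lam : ℝ) (hlam : 1 < lam)
    (F Finv G : ℝ → ℝ)
    (hFcont : Continuous F) (hFmono : StrictMono F)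
    (hFper : ∀ x, F (x + 1) = F x + d)
    (hFinv₁ : ∀ x, Finv (F x) = x) (hFinv₂ : ∀ x, F (Finv x) = x)
    (hFderiv : ∀ x : ℝ, ∃ D : ℝ, HasDerivAt F D x ∧ lam ≤ D)
    (hGcont : Continuous G) (hGmono : StrictMono G)
    (hGper : ∀ x, G (x + 1) = G x + d) :
    (∃! H : ℝ → ℝ, Continuous H ∧ (∀ x, H (x + 1) = H x + 1) ∧
        ∀ x, Finv (H (G x)) = H x) ∧
    (∀ H : ℝ → ℝ, Continuous H → (∀ x, H (x + 1) = H x + 1) →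
        (∀ x, Finv (H (G x)) = H x) → ∀ x, F (H x) = H (G x)) :=
  stmt_1_general d lam hlam F Finv G hFper hFinv₁ hFinv₂ hFderiv hGcont hGper
end

section
/- Let f and g be circle endomorphisms of degree d ≥ 2 such that the maximal diameters ε_{n,f} and ε_{n,g} of the intervals in their n-th Markov partitions tend to zero as n → ∞. Then f and g are topologically conjugate: there exists a homeomorphism h of the circle with f ∘ h = h ∘ g. -/
/-- The composition `g_{i₀} ∘ g_{i₁} ∘ ⋯ ∘ g_{i_{n-1}}` of inverse branches
`g_i(x) = F⁻¹(x + i)` along the word `w = [i₀, …, i_{n-1}]`. -/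
def branchComp (d : ℕ) (Finv : ℝ → ℝ) (w : List (Fin d)) : ℝ → ℝ :=
  w.foldr (fun i f => (fun x => Finv (x + (i : ℝ))) ∘ f) id

/-- The interval `I_w = g_{i₀} ∘ ⋯ ∘ g_{i_{n-1}}([0,1])` of the Markov partition. -/
def cylInterval (d : ℕ) (Finv : ℝ → ℝ) (w : List (Fin d)) : Set ℝ :=
  branchComp d Finv w '' Set.Icc 0 1

/-!
The conjugacy is `H = lim Finv^[n] ∘ G^[n]`. On each unit interval `[k, k + 1]` the map
`Finv^[n]` is an integer translate of a branch composition along a word of length `n`, so it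
squeezes that interval into a translate of a cylinder of the `n`-th Markov partition of `f`.
Since `Finv^[j] ∘ G^[j]` fixes the integers and is monotone, it preserves every `[k, k + 1]`;
hence `Finv^[n + j] ∘ G^[n + j]` and `Finv^[n] ∘ G^[n]` differ by at most the mesh of that
partition, and the sequence is uniformly Cauchy. The limit is continuous, monotone, commutes
with the unit translation and semiconjugates `G` to `F`; the same construction with `f` and `g`
exchanged gives a two-sided inverse.
-/

open Set Filter Function Topology

def CylinderDiamTendstoZero (d : ℕ) (Finv : ℝ → ℝ) : Prop :=
  ∀ ε > (0 : ℝ), ∃ N : ℕ, ∀ n ≥ N, ∀ w : List (Fin d), w.length = n →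
    ∀ x ∈ cylInterval d Finv w, ∀ y ∈ cylInterval d Finv w, |x - y| < ε

def IsLiftOfDegree (d : ℕ) (F : ℝ → ℝ) : Prop :=
  ∀ x, F (x + 1) = F x + d

namespace IsLiftOfDegree

variable {d : ℕ} {F Finv : ℝ → ℝ}

lemma map_add_intCast (hF : IsLiftOfDegree d F) (x : ℝ) (k : ℤ) :
    F (x + k) = F x + d * k := by
  have hper : Periodic (fun y => F y - d * y) 1 := fun y => by dsimp only; rw [hF y]; ring
  have := hper.int_mul k x
  simp only [mul_one] at this
  linarith

lemma map_intCast (hF : IsLiftOfDegree d F) (hF0 : F 0 = 0) (k : ℤ) :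
    F k = d * k := by
  simpa [hF0] using hF.map_add_intCast 0 k

lemma iterate (hF : IsLiftOfDegree d F) (n : ℕ) : IsLiftOfDegree (d ^ n) F^[n] := by
  induction n with
  | zero => simp [IsLiftOfDegree]
  | succ n ih =>
    intro x
    have := hF.map_add_intCast (F^[n] x) (d ^ n : ℕ)
    rw [iterate_succ_apply', ih, iterate_succ_apply']
    push_cast at this ⊢
    rw [this]
    ring

lemma inv_add_mul_intCast (hF : IsLiftOfDegree d F) (hl : LeftInverse Finv F)
    (hr : RightInverse Finv F) (x : ℝ) (k : ℤ) : Finv (x + d * k) = Finv x + k := by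
  rw [← hl (Finv x + k), hF.map_add_intCast, hr]

end IsLiftOfDegree

lemma StrictMono.of_rightInverse {α β : Type*} [LinearOrder α] [Preorder β] {f : α → β}
    {g : β → α} (hf : StrictMono f) (hg : RightInverse g f) : StrictMono g :=
  fun a b hab => hf.lt_iff_lt.mp (by rwa [hg a, hg b])

section Markov

variable {d : ℕ} {F Finv : ℝ → ℝ}

lemma exists_iterate_add_intCast_eq_branchComp (hd : 0 < d)
    (hF : IsLiftOfDegree d F) (hl : LeftInverse Finv F) (hr : RightInverse Finv F)
    (n : ℕ) (k : ℤ) :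
    ∃ (w : List (Fin d)) (m : ℤ), w.length = n ∧
      ∀ t, Finv^[n] (t + k) = branchComp d Finv w t + m := by
  induction n with
  | zero => exact ⟨[], k, rfl, fun t => by simp [branchComp]⟩
  | succ n ih =>
    obtain ⟨w, m, hlen, hw⟩ := ih
    have hmod_nonneg : 0 ≤ m % d := Int.emod_nonneg m (by omega)
    have hmod_lt : (m % d).toNat < d := by
      have := Int.emod_lt_of_pos m (by omega : (0 : ℤ) < d)
      omega
    -- `m = r + d * q` with `0 ≤ r < d`: `r` is the new first letter, `q` passes through `Finv`
    refine ⟨⟨(m % d).toNat, hmod_lt⟩ :: w, m / d, by simp [hlen], fun t => ?_⟩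
    have hm : (m : ℝ) = ((m % d : ℤ) : ℝ) + d * (m / d : ℤ) := by
      exact_mod_cast (Int.emod_add_mul_ediv m d).symm
    have hdigit : (((m % d).toNat : ℕ) : ℝ) = ((m % d : ℤ) : ℝ) := by
      exact_mod_cast Int.toNat_of_nonneg hmod_nonneg
    rw [iterate_succ_apply', hw, hm, ← add_assoc, hF.inv_add_mul_intCast hl hr]
    simp [branchComp, hdigit]

lemma exists_abs_iterate_sub_lt (hd : 0 < d) (hF : IsLiftOfDegree d F)
    (hl : LeftInverse Finv F) (hr : RightInverse Finv F) (hmesh : CylinderDiamTendstoZero d Finv)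
    {ε : ℝ} (hε : 0 < ε) :
    ∃ N, ∀ n ≥ N, ∀ k : ℤ, ∀ y ∈ Icc (k : ℝ) (k + 1), ∀ z ∈ Icc (k : ℝ) (k + 1),
      |Finv^[n] y - Finv^[n] z| < ε := by
  obtain ⟨N, hN⟩ := hmesh ε hε
  refine ⟨N, fun n hn k y hy z hz => ?_⟩
  obtain ⟨w, m, hlen, hw⟩ := exists_iterate_add_intCast_eq_branchComp hd hF hl hr n k
  have hmem : ∀ t ∈ Icc (k : ℝ) (k + 1), Finv^[n] t - m ∈ cylInterval d Finv w := by
    intro t ht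
    refine ⟨t - k, ⟨by linarith [ht.1], by linarith [ht.2]⟩, ?_⟩
    have := hw (t - k)
    rw [sub_add_cancel] at this
    linarith
  simpa using hN n hn w hlen _ (hmem y hy) _ (hmem z hz)

end Markov

lemma exists_tendstoUniformly_of_uniformCauchySeqOn {ι α β : Type*} [Nonempty ι]
    [SemilatticeSup ι] [UniformSpace β] [CompleteSpace β] {Φ : ι → α → β}
    (h : UniformCauchySeqOn Φ atTop univ) : ∃ f, TendstoUniformly Φ f atTop := by
  choose f hf using fun x => cauchySeq_tendsto_of_complete (h.cauchySeq (mem_univ x))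
  exact ⟨f, tendstoUniformlyOn_univ.mp (h.tendstoUniformlyOn_of_tendsto fun x _ => hf x)⟩

lemma leftInverse_of_tendstoUniformly {ι α β : Type*} {p : Filter ι} [p.NeBot]
    [TopologicalSpace α] [UniformSpace β] [T2Space β] {φ : ι → α → β} {ψ : ι → β → α}
    {f : α → β} {g : β → α} (hφ : TendstoUniformly φ f p) (hf : Continuous f)
    (hψ : ∀ y, Tendsto (fun i => ψ i y) p (𝓝 (g y))) (hinv : ∀ i, LeftInverse (φ i) (ψ i)) :
    LeftInverse f g := fun y =>
  tendsto_nhds_unique (hφ.tendsto_comp hf.continuousAt (hψ y))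
    (by simpa only [hinv _ _] using tendsto_const_nhds)

section Conjugacy

variable {d : ℕ} {F Finv G : ℝ → ℝ}

lemma iterate_inv_comp_iterate_intCast (hF : IsLiftOfDegree d F) (hF0 : F 0 = 0)
    (hl : LeftInverse Finv F) (hG : IsLiftOfDegree d G) (hG0 : G 0 = 0) (n : ℕ) (k : ℤ) :
    (Finv^[n] ∘ G^[n]) k = k := by
  rw [comp_apply, (hG.iterate n).map_intCast (iterate_fixed hG0 n),
    ← (hF.iterate n).map_intCast (iterate_fixed hF0 n), hl.iterate n]

lemma monotone_iterate_inv_comp_iterate (hFmono : StrictMono F) (hr : RightInverse Finv F)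
    (hGmono : Monotone G) (n : ℕ) : Monotone (Finv^[n] ∘ G^[n]) :=
  ((hFmono.of_rightInverse hr).monotone.iterate n).comp (hGmono.iterate n)

lemma mapsTo_iterate_inv_comp_iterate (hF : IsLiftOfDegree d F) (hF0 : F 0 = 0)
    (hFmono : StrictMono F) (hl : LeftInverse Finv F) (hr : RightInverse Finv F)
    (hG : IsLiftOfDegree d G) (hG0 : G 0 = 0) (hGmono : Monotone G) (n : ℕ) (k : ℤ) :
    MapsTo (Finv^[n] ∘ G^[n]) (Icc (k : ℝ) (k + 1)) (Icc (k : ℝ) (k + 1)) := by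
  have h := (monotone_iterate_inv_comp_iterate hFmono hr hGmono n).mapsTo_Icc
    (a := (k : ℝ)) (b := ((k + 1 : ℤ) : ℝ))
  rwa [iterate_inv_comp_iterate_intCast hF hF0 hl hG hG0,
    iterate_inv_comp_iterate_intCast hF hF0 hl hG hG0, Int.cast_add, Int.cast_one] at h

lemma uniformCauchySeqOn_iterate_inv_comp_iterate (hd : 0 < d) (hF : IsLiftOfDegree d F)
    (hF0 : F 0 = 0) (hFmono : StrictMono F) (hl : LeftInverse Finv F) (hr : RightInverse Finv F)
    (hG : IsLiftOfDegree d G) (hG0 : G 0 = 0) (hGmono : Monotone G)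
    (hmesh : CylinderDiamTendstoZero d Finv) :
    UniformCauchySeqOn (fun n => Finv^[n] ∘ G^[n]) atTop univ := by
  rw [Metric.uniformCauchySeqOn_iff]
  intro ε hε
  obtain ⟨N, hN⟩ := exists_abs_iterate_sub_lt hd hF hl hr hmesh hε
  have hclose : ∀ n ≥ N, ∀ j x, |Finv^[n + j] (G^[n + j] x) - Finv^[n] (G^[n] x)| < ε := by
    intro n hn j x
    set y := G^[n] x
    have hy : y ∈ Icc (⌊y⌋ : ℝ) (⌊y⌋ + 1) := ⟨Int.floor_le y, (Int.lt_floor_add_one y).le⟩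
    rw [iterate_add_apply Finv, add_comm n j, iterate_add_apply G]
    exact hN n hn ⌊y⌋ _ (mapsTo_iterate_inv_comp_iterate hF hF0 hFmono hl hr hG hG0 hGmono j _ hy)
      _ hy
  refine ⟨N, fun m hm n hn x _ => ?_⟩
  simp only [comp_apply, Real.dist_eq]
  rcases le_total n m with h | h
  · obtain ⟨j, rfl⟩ := Nat.exists_eq_add_of_le h
    exact hclose n hn j x
  · obtain ⟨j, rfl⟩ := Nat.exists_eq_add_of_le h
    rw [abs_sub_comm]
    exact hclose m hm j x

lemma map_add_one_of_tendsto (hF : IsLiftOfDegree d F) (hl : LeftInverse Finv F)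
    (hr : RightInverse Finv F) (hG : IsLiftOfDegree d G) {H : ℝ → ℝ}
    (hH : ∀ x, Tendsto (fun n => (Finv^[n] ∘ G^[n]) x) atTop (𝓝 (H x))) (x : ℝ) :
    H (x + 1) = H x + 1 := by
  have happrox : ∀ n, (Finv^[n] ∘ G^[n]) (x + 1) = (Finv^[n] ∘ G^[n]) x + 1 := fun n => by
    simpa [hG.iterate n x] using
      (hF.iterate n).inv_add_mul_intCast (hl.iterate n) (hr.iterate n) (G^[n] x) 1
  exact tendsto_nhds_unique (hH (x + 1)) (by simpa only [happrox] using (hH x).add_const 1)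

lemma semiconj_of_tendsto (hFcont : Continuous F) (hr : RightInverse Finv F) {H : ℝ → ℝ}
    (hH : ∀ x, Tendsto (fun n => (Finv^[n] ∘ G^[n]) x) atTop (𝓝 (H x))) :
    Semiconj H G F := fun x => by
  have happrox : ∀ n, F ((Finv^[n + 1] ∘ G^[n + 1]) x) = (Finv^[n] ∘ G^[n]) (G x) := fun n => by
    rw [comp_apply, iterate_succ_apply' Finv, hr, iterate_succ_apply G, comp_apply]
  exact tendsto_nhds_unique (hH (G x))
    (((hFcont.tendsto _).comp ((hH x).comp (tendsto_add_atTop_nat 1))).congr happrox)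

lemma exists_tendstoUniformly_iterate_inv_comp_iterate (hd : 0 < d) (hF : IsLiftOfDegree d F)
    (hF0 : F 0 = 0) (hFmono : StrictMono F) (hl : LeftInverse Finv F) (hr : RightInverse Finv F)
    (hG : IsLiftOfDegree d G) (hG0 : G 0 = 0) (hGmono : StrictMono G) (hGsurj : Surjective G)
    (hmesh : CylinderDiamTendstoZero d Finv) :
    ∃ H, TendstoUniformly (fun n => Finv^[n] ∘ G^[n]) H atTop ∧ Continuous H ∧ Monotone H ∧
      (∀ x, H (x + 1) = H x + 1) ∧ Semiconj H G F := by
  have hF_cont : Continuous F := hFmono.monotone.continuous_of_surjective hr.surjective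
  have hFinv_cont : Continuous Finv :=
    (hFmono.of_rightInverse hr).monotone.continuous_of_surjective hl.surjective
  have hG_cont : Continuous G := hGmono.monotone.continuous_of_surjective hGsurj
  obtain ⟨H, hH⟩ := exists_tendstoUniformly_of_uniformCauchySeqOn
    (uniformCauchySeqOn_iterate_inv_comp_iterate hd hF hF0 hFmono hl hr hG hG0 hGmono.monotone
      hmesh)
  have hH_cont : Continuous H :=
    hH.continuous (.of_forall fun n => (hFinv_cont.iterate n).comp (hG_cont.iterate n))
  have hH_mono : Monotone H := monotone_of_frequently_monotone_of_tendsto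
    (.of_forall (monotone_iterate_inv_comp_iterate hFmono hr hGmono.monotone)) hH.tendsto_at
  exact ⟨H, hH, hH_cont, hH_mono, map_add_one_of_tendsto hF hl hr hG hH.tendsto_at,
    semiconj_of_tendsto hF_cont hr hH.tendsto_at⟩

end Conjugacy

theorem stmt_2_general (d : ℕ) (hd : 2 ≤ d)
    (F Finv G Ginv : ℝ → ℝ)
    (hFmono : StrictMono F)
    (hFper : ∀ x, F (x + 1) = F x + d) (hF0 : F 0 = 0)
    (hFinv₁ : ∀ x, Finv (F x) = x) (hFinv₂ : ∀ x, F (Finv x) = x)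
    (hGmono : StrictMono G)
    (hGper : ∀ x, G (x + 1) = G x + d) (hG0 : G 0 = 0)
    (hGinv₁ : ∀ x, Ginv (G x) = x) (hGinv₂ : ∀ x, G (Ginv x) = x)
    (hεF : ∀ ε > (0 : ℝ), ∃ N : ℕ, ∀ n ≥ N, ∀ w : List (Fin d), w.length = n →
      ∀ x ∈ cylInterval d Finv w, ∀ y ∈ cylInterval d Finv w, |x - y| < ε)
    (hεG : ∀ ε > (0 : ℝ), ∃ N : ℕ, ∀ n ≥ N, ∀ w : List (Fin d), w.length = n →
      ∀ x ∈ cylInterval d Ginv w, ∀ y ∈ cylInterval d Ginv w, |x - y| < ε) :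
    ∃ H : ℝ → ℝ, Continuous H ∧ StrictMono H ∧ Function.Bijective H ∧
      (∀ x, H (x + 1) = H x + 1) ∧ ∀ x, F (H x) = H (G x) := by
  obtain ⟨H, hH, hH_cont, hH_mono, hH_add_one, hH_semiconj⟩ :=
    exists_tendstoUniformly_iterate_inv_comp_iterate (by omega) hFper hF0 hFmono hFinv₁ hFinv₂
      hGper hG0 hGmono (RightInverse.surjective hGinv₂) hεF
  obtain ⟨K, hK, hK_cont, -⟩ :=
    exists_tendstoUniformly_iterate_inv_comp_iterate (by omega) hGper hG0 hGmono hGinv₁ hGinv₂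
      hFper hF0 hFmono (RightInverse.surjective hFinv₂) hεG
  have hHK : LeftInverse H K := leftInverse_of_tendstoUniformly hH hH_cont hK.tendsto_at
    fun n => (LeftInverse.iterate hGinv₂ n).comp (LeftInverse.iterate hFinv₁ n)
  have hKH : LeftInverse K H := leftInverse_of_tendstoUniformly hK hK_cont hH.tendsto_at
    fun n => (LeftInverse.iterate hFinv₂ n).comp (LeftInverse.iterate hGinv₁ n)
  exact ⟨H, hH_cont, hH_mono.strictMono_of_injective hKH.injective,
    ⟨hKH.injective, hHK.surjective⟩, hH_add_one, fun x => (hH_semiconj x).symm⟩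

/-- two circle endomorphisms of the same degree `d ≥ 2` whose Markov
partitions have maximal diameters tending to zero are topologically conjugate. -/
theorem stmt_2 (d : ℕ) (hd : 2 ≤ d)
    (F Finv G Ginv : ℝ → ℝ)
    (hFcont : Continuous F) (hFmono : StrictMono F) (hFbij : Function.Bijective F)
    (hFper : ∀ x, F (x + 1) = F x + d) (hF0 : F 0 = 0)
    (hFinv₁ : ∀ x, Finv (F x) = x) (hFinv₂ : ∀ x, F (Finv x) = x)
    (hGcont : Continuous G) (hGmono : StrictMono G) (hGbij : Function.Bijective G)
    (hGper : ∀ x, G (x + 1) = G x + d) (hG0 : G 0 = 0)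
    (hGinv₁ : ∀ x, Ginv (G x) = x) (hGinv₂ : ∀ x, G (Ginv x) = x)
    (hεF : ∀ ε > (0 : ℝ), ∃ N : ℕ, ∀ n ≥ N, ∀ w : List (Fin d), w.length = n →
      ∀ x ∈ cylInterval d Finv w, ∀ y ∈ cylInterval d Finv w, |x - y| < ε)
    (hεG : ∀ ε > (0 : ℝ), ∃ N : ℕ, ∀ n ≥ N, ∀ w : List (Fin d), w.length = n →
      ∀ x ∈ cylInterval d Ginv w, ∀ y ∈ cylInterval d Ginv w, |x - y| < ε) :
    ∃ H : ℝ → ℝ, Continuous H ∧ StrictMono H ∧ Function.Bijective H ∧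
      (∀ x, H (x + 1) = H x + 1) ∧ ∀ x, F (H x) = H (G x) :=
  stmt_2_general d hd F Finv G Ginv hFmono hFper hF0 hFinv₁ hFinv₂ hGmono hGper hG0 hGinv₁ hGinv₂
    hεF hεG
end

section
/- Let f be a uniformly symmetric circle endomorphism of degree d ≥ 2, so there exists M > 1 with M^{-1} ≤ |F^{-n}(x+t) - F^{-n}(x)| / |F^{-n}(x) - F^{-n}(x-t)| ≤ M for all x ∈ ℝ, t > 0, n ≥ 1. Then there is a constant C > 0 such that for every finite word κ_n = j_{n-1}⋯j_1 j_0 in {0,…,d-1}, the ratio S(κ_n) = |I_{κ_n}| / |I_{σ^-(κ_n)}| ≥ C, where σ^-(κ_n) = j_{n-1}⋯j_1 deletes the rightmost symbol. -/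
/-- The length `|I_{κ_n}|` of the Markov partition interval. -/
noncomputable def cylLen (d : ℕ) (Finv : ℝ → ℝ) (w : List (Fin d)) : ℝ :=
  sSup (cylInterval d Finv w) - sInf (cylInterval d Finv w)

/-- The numeric code of a word: `wcode [j_{n-1},…,j₀] = Σ jᵢ dⁱ`. -/
def wcode (d : ℕ) : List (Fin d) → ℕ
  | [] => 0
  | j :: w => wcode d w + j * d ^ w.length

lemma wcode_append (d : ℕ) (w : List (Fin d)) (c : Fin d) :
    wcode d (w ++ [c]) = c + d * wcode d w := by
  induction w with
  | nil => simp [wcode]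
  | cons j w ih =>
      show wcode d (w ++ [c]) + j * d ^ (w ++ [c]).length
          = c + d * (wcode d w + j * d ^ w.length)
      rw [ih, List.length_append]
      simp only [List.length_cons, List.length_nil]
      ring

/-- for a uniformly symmetric (hence uniformly `M`-quasisymmetric)
circle endomorphism of degree `d ≥ 2` there is `C > 0` with
`S(κ_n) = |I_{κ_n}|/|I_{σ⁻(κ_n)}| ≥ C` for every finite word `κ_n`;
here `σ⁻` deletes the rightmost symbol (`List.dropLast`). -/
theorem stmt_6 (d : ℕ) (hd : 2 ≤ d) (M : ℝ) (hM : 1 < M)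
    (F Finv : ℝ → ℝ)
    (hFcont : Continuous F) (hFmono : StrictMono F) (hFbij : Function.Bijective F)
    (hFper : ∀ x, F (x + 1) = F x + d) (hF0 : F 0 = 0)
    (hFinv₁ : ∀ x, Finv (F x) = x) (hFinv₂ : ∀ x, F (Finv x) = x)
    (hqs : ∀ (n : ℕ), 1 ≤ n → ∀ x : ℝ, ∀ t > (0 : ℝ),
      1 / M ≤ (Finv^[n] (x + t) - Finv^[n] x) / (Finv^[n] x - Finv^[n] (x - t)) ∧
      (Finv^[n] (x + t) - Finv^[n] x) / (Finv^[n] x - Finv^[n] (x - t)) ≤ M) :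
    ∃ C > (0 : ℝ), ∀ w : List (Fin d), w ≠ [] →
      C ≤ cylLen d Finv w / cylLen d Finv w.dropLast := by
  have hd0 : (0:ℝ) < d := by positivity
  have hM0 : (0:ℝ) < M := lt_trans one_pos hM
  -- Finv is a strictly monotone continuous surjection
  have hInvMono : StrictMono Finv := by
    intro x y hxy
    by_contra h
    push_neg at h
    have h2 := hFmono.monotone h
    rw [hFinv₂, hFinv₂] at h2
    exact absurd h2 (not_le.mpr hxy)
  have hInvSurj : Function.Surjective Finv := fun x => ⟨F x, hFinv₁ x⟩
  have hInvCont : Continuous Finv := by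
    have h : Finv = ⇑(StrictMono.orderIsoOfSurjective Finv hInvMono hInvSurj) := by
      rw [StrictMono.coe_orderIsoOfSurjective]
    rw [h]
    exact OrderIso.continuous _
  have hItMono : ∀ n : ℕ, StrictMono (Finv^[n]) := fun n => hInvMono.iterate n
  have hItCont : ∀ n : ℕ, Continuous (Finv^[n]) := fun n => hInvCont.iterate n
  -- shift identities
  have hshift1 : ∀ z : ℝ, Finv (z + d) = Finv z + 1 := by
    intro z
    have h1 : F (Finv z + 1) = z + d := by rw [hFper, hFinv₂]
    calc Finv (z + d) = Finv (F (Finv z + 1)) := by rw [h1]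
    _ = Finv z + 1 := hFinv₁ _
  have hshiftk : ∀ (k : ℕ) (z : ℝ), Finv (z + k * d) = Finv z + k := by
    intro k
    induction k with
    | zero => simp
    | succ k ih =>
      intro z
      have e : z + ((k+1 : ℕ) : ℝ) * d = (z + k * d) + d := by push_cast; ring
      rw [e, hshift1, ih]
      push_cast
      ring
  have hiter : ∀ (n j : ℕ) (z : ℝ), Finv^[n] (z + j * (d:ℝ) ^ n) = Finv^[n] z + j := by
    intro n
    induction n with
    | zero => intro j z; simp
    | succ n ih =>
      intro j z
      rw [Function.iterate_succ_apply, Function.iterate_succ_apply]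
      have e : z + (j:ℝ) * (d:ℝ) ^ (n+1) = z + ((j * d ^ n : ℕ) : ℝ) * d := by
        push_cast; ring
      rw [e, hshiftk]
      have e2 : Finv z + ((j * d ^ n : ℕ) : ℝ) = Finv z + (j:ℝ) * (d:ℝ) ^ n := by
        push_cast; ring
      rw [e2, ih]
  -- branch maps via iterates
  have hbranch : ∀ w : List (Fin d), ∀ x : ℝ,
      branchComp d Finv w x = Finv^[w.length] (x + wcode d w) := by
    intro w
    induction w with
    | nil => intro x; simp [branchComp, wcode]
    | cons j w ih =>
      intro x
      have h1 : branchComp d Finv (j :: w) x = Finv (branchComp d Finv w x + (j:ℝ)) := rfl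
      rw [h1, ih, List.length_cons, Function.iterate_succ_apply']
      congr 1
      have e : x + ((wcode d (j :: w) : ℕ) : ℝ)
          = (x + (wcode d w : ℕ)) + ((j : ℕ) : ℝ) * (d:ℝ) ^ w.length := by
        simp only [wcode]; push_cast; ring
      rw [e, hiter]
  -- image of Icc under continuous monotone map
  have himg : ∀ g : ℝ → ℝ, Continuous g → Monotone g → ∀ u v : ℝ, u ≤ v →
      g '' Set.Icc u v = Set.Icc (g u) (g v) := by
    intro g hc hm u v huv
    apply Set.Subset.antisymm
    · rintro _ ⟨x, hx, rfl⟩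
      exact ⟨hm hx.1, hm hx.2⟩
    · exact intermediate_value_Icc huv hc.continuousOn
  -- the length formula
  have hlen : ∀ w : List (Fin d),
      cylLen d Finv w
        = Finv^[w.length] ((wcode d w : ℝ) + 1) - Finv^[w.length] (wcode d w) := by
    intro w
    have hmono : Monotone fun x : ℝ => Finv^[w.length] (x + (wcode d w : ℝ)) :=
      ((hItMono w.length).comp (strictMono_id.add_const _)).monotone
    have hcont : Continuous fun x : ℝ => Finv^[w.length] (x + (wcode d w : ℝ)) :=
      (hItCont w.length).comp (continuous_id.add continuous_const)
    have hset : cylInterval d Finv w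
        = Set.Icc (Finv^[w.length] (wcode d w)) (Finv^[w.length] ((wcode d w : ℝ) + 1)) := by
      unfold cylInterval
      have e : branchComp d Finv w '' Set.Icc 0 1
          = (fun x : ℝ => Finv^[w.length] (x + (wcode d w : ℝ))) '' Set.Icc 0 1 := by
        apply Set.image_congr
        intro x _
        exact hbranch w x
      rw [e, himg _ hcont hmono 0 1 zero_le_one]
      norm_num [add_comm]
    have hle : Finv^[w.length] (wcode d w) ≤ Finv^[w.length] ((wcode d w : ℝ) + 1) :=
      ((hItMono w.length) (lt_add_one _)).le
    rw [cylLen, hset, csSup_Icc hle, csInf_Icc hle]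
  -- F and Finv on multiples
  have hFnat : ∀ k : ℕ, F k = k * d := by
    intro k
    induction k with
    | zero => simpa using hF0
    | succ k ih =>
      have e : ((k+1:ℕ):ℝ) = (k:ℝ) + 1 := by push_cast; ring
      rw [e, hFper, ih]; ring
  have hInvNat : ∀ k : ℕ, Finv ((k:ℝ) * d) = k := by
    intro k
    rw [← hFnat, hFinv₁]
  -- the constant
  refine ⟨1 / (d * M ^ (2 * d)), by positivity, ?_⟩
  intro w hw
  obtain ⟨hwc⟩ : ∃ _ : w.dropLast ++ [w.getLast hw] = w, True :=
    ⟨List.dropLast_append_getLast hw, trivial⟩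
  set w' : List (Fin d) := w.dropLast with hw'
  set c : Fin d := w.getLast hw with hc
  have hwlen : w.length = w'.length + 1 := by
    conv_lhs => rw [← hwc]
    simp
  set n : ℕ := w'.length + 1 with hn
  set m' : ℕ := wcode d w' with hm'
  have hcode : wcode d w = c + d * m' := by
    conv_lhs => rw [← hwc]
    rw [wcode_append]
  set a : ℝ := (m' : ℝ) * d with ha
  set p : ℕ → ℝ := fun k => Finv^[n] (a + k + 1) - Finv^[n] (a + k) with hp
  have hppos : ∀ k : ℕ, 0 < p k := by
    intro k
    exact sub_pos.mpr (hItMono n (by linarith))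
  -- cylLen w = p c
  have hlenw : cylLen d Finv w = p (c : ℕ) := by
    rw [hlen w, hwlen]
    have e1 : ((wcode d w : ℕ) : ℝ) = a + ((c:ℕ):ℝ) := by
      rw [hcode]; push_cast; ring
    simp only [hp, ← hn, e1]
  -- cylLen w' in terms of Finv^[n]
  have hlenw' : cylLen d Finv w' = Finv^[n] (a + d) - Finv^[n] a := by
    rw [hlen w']
    have e1 : Finv^[w'.length] ((m' : ℝ)) = Finv^[n] a := by
      rw [hn, Function.iterate_succ_apply, ha, hInvNat]
    have e2 : Finv^[w'.length] ((m' : ℝ) + 1) = Finv^[n] (a + d) := by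
      have e3 : a + (d:ℝ) = ((m' + 1 : ℕ) : ℝ) * d := by push_cast; ring
      rw [hn, Function.iterate_succ_apply, e3, hInvNat]
      push_cast; ring_nf
    rw [← hm', e1, e2]
  -- quasisymmetry step
  have hstep : ∀ k : ℕ, p (k+1) ≤ M * p k ∧ p k ≤ M * p (k+1) := by
    intro k
    obtain ⟨h1, h2⟩ := hqs n (Nat.le_add_left 1 _) (a + k + 1) 1 one_pos
    have e1 : a + k + 1 + 1 = a + ((k+1:ℕ):ℝ) + 1 := by push_cast; ring
    have e2 : a + k + 1 - 1 = a + (k:ℝ) := by ring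
    have e3 : a + ((k+1:ℕ):ℝ) = a + k + 1 := by push_cast; ring
    rw [e1, e2] at h1 h2
    have hden : 0 < Finv^[n] (a + k + 1) - Finv^[n] (a + (k:ℝ)) := hppos k
    have hnum : p (k+1) = Finv^[n] (a + ((k+1:ℕ):ℝ) + 1) - Finv^[n] (a + k + 1) := by
      simp only [hp, e3]
    constructor
    · rw [hnum]
      have := (div_le_iff₀ hden).mp h2
      calc Finv^[n] (a + ((k+1:ℕ):ℝ) + 1) - Finv^[n] (a + k + 1)
          ≤ M * (Finv^[n] (a + k + 1) - Finv^[n] (a + (k:ℝ))) := this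
      _ = M * p k := rfl
    · have h1' := (le_div_iff₀ hden).mp h1
      have h1'' := mul_le_mul_of_nonneg_left h1' hM0.le
      have e4 : M * (1 / M * (Finv^[n] (a + k + 1) - Finv^[n] (a + (k:ℝ))))
          = Finv^[n] (a + k + 1) - Finv^[n] (a + (k:ℝ)) := by
        field_simp
      rw [e4] at h1''
      calc p k = Finv^[n] (a + k + 1) - Finv^[n] (a + (k:ℝ)) := rfl
      _ ≤ M * (Finv^[n] (a + ((k+1:ℕ):ℝ) + 1) - Finv^[n] (a + k + 1)) := h1''
      _ = M * p (k+1) := by rw [hnum]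
  have hup : ∀ k : ℕ, p k ≤ M ^ k * p 0 := by
    intro k
    induction k with
    | zero => simp
    | succ k ih =>
      calc p (k+1) ≤ M * p k := (hstep k).1
      _ ≤ M * (M ^ k * p 0) := by
          exact mul_le_mul_of_nonneg_left ih hM0.le
      _ = M ^ (k+1) * p 0 := by ring
  have hdn : ∀ k : ℕ, p 0 ≤ M ^ k * p k := by
    intro k
    induction k with
    | zero => simp
    | succ k ih =>
      calc p 0 ≤ M ^ k * p k := ih
      _ ≤ M ^ k * (M * p (k+1)) := by
          exact mul_le_mul_of_nonneg_left (hstep k).2 (by positivity)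
      _ = M ^ (k+1) * p (k+1) := by ring
  have hcomp : ∀ k : ℕ, k ≤ d → p k ≤ M ^ (2*d) * p (c : ℕ) := by
    intro k hk
    have hc' : (c : ℕ) ≤ d := (c.isLt).le
    calc p k ≤ M ^ k * p 0 := hup k
    _ ≤ M ^ k * (M ^ (c:ℕ) * p (c:ℕ)) := mul_le_mul_of_nonneg_left (hdn _) (by positivity)
    _ = M ^ (k + (c:ℕ)) * p (c:ℕ) := by rw [pow_add]; ring
    _ ≤ M ^ (2*d) * p (c:ℕ) := by
        apply mul_le_mul_of_nonneg_right _ (hppos _).le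
        exact pow_le_pow_right₀ hM.le (by omega)
  -- sum formula
  have hsum : Finv^[n] (a + d) - Finv^[n] a = ∑ k ∈ Finset.range d, p k := by
    have h0 := Finset.sum_range_sub (fun k : ℕ => Finv^[n] (a + k)) d
    have e : ∀ k ∈ Finset.range d, p k
        = (fun k : ℕ => Finv^[n] (a + k)) (k+1) - (fun k : ℕ => Finv^[n] (a + k)) k := by
      intro k _
      simp only [hp]
      push_cast
      ring_nf
    rw [Finset.sum_congr rfl e, h0]
    norm_num
  have hSle : Finv^[n] (a + d) - Finv^[n] a ≤ d * (M ^ (2*d) * p (c:ℕ)) := by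
    rw [hsum]
    calc ∑ k ∈ Finset.range d, p k ≤ ∑ _k ∈ Finset.range d, M ^ (2*d) * p (c:ℕ) := by
          apply Finset.sum_le_sum
          intro k hk
          exact hcomp k (Finset.mem_range.mp hk).le
    _ = d * (M ^ (2*d) * p (c:ℕ)) := by
        rw [Finset.sum_const, Finset.card_range, nsmul_eq_mul]
  have hSpos : 0 < Finv^[n] (a + d) - Finv^[n] a :=
    sub_pos.mpr (hItMono n (by linarith))
  -- conclude
  rw [hlenw, hlenw']
  rw [le_div_iff₀ hSpos]
  calc 1 / (↑d * M ^ (2 * d)) * (Finv^[n] (a + ↑d) - Finv^[n] a)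
      ≤ 1 / (↑d * M ^ (2 * d)) * (d * (M ^ (2*d) * p (c:ℕ))) := by
        apply mul_le_mul_of_nonneg_left hSle (by positivity)
  _ = p (c:ℕ) := by field_simp
end

section
/- Let f be a circle endomorphism of degree d ≥ 2 whose nested Markov partitions have bounded geometry: there is C > 0 with |I_{κ_n}| ≥ C |I_{σ^-(κ_n)}| for all finite words κ_n. Then there exist constants D > 0 and 0 < τ < 1 such that ε_n ≤ D τ^n for all n ≥ 1, where ε_n is the maximal length of intervals in the n-th Markov partition. -/
/-!
The `d` children of an interval of the Markov partition tile it, and by bounded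
geometry each of them has at least a `C`-fraction of its length. Since `d ≥ 2`, every child
has a sibling, so a child has at most a `(1 - C)`-fraction of its parent's length, and
`|I_{κ_n}| ≤ τⁿ` with `τ = max (1 - C) (1 / 2)`.
-/

open Finset

theorem le_one_sub_mul_of_sum_eq {ι : Type*} [Fintype ι] [Nontrivial ι] {x : ι → ℝ} {L C : ℝ}
    (hx : ∀ i, 0 ≤ x i) (hsum : ∑ i, x i = L) (hlow : ∀ i, C * L ≤ x i) (i : ι) :
    x i ≤ (1 - C) * L := by
  classical
  obtain ⟨k, hki⟩ := exists_ne i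
  have hpair : x i + x k ≤ L := by
    rw [← hsum, ← sum_pair hki.symm]
    exact sum_le_univ_sum_of_nonneg hx
  linarith [hlow k]

theorem le_pow_length_mul_of_append_singleton {α : Type*} {f : List α → ℝ} {τ : ℝ} (hτ : 0 ≤ τ)
    (hstep : ∀ u j, f (u ++ [j]) ≤ τ * f u) (w : List α) : f w ≤ τ ^ w.length * f [] := by
  induction w using List.reverseRecOn with
  | nil => simp
  | append_singleton u j ih =>
    calc f (u ++ [j]) ≤ τ * f u := hstep u j
      _ ≤ τ * (τ ^ u.length * f []) := mul_le_mul_of_nonneg_left ih hτ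
      _ = τ ^ (u ++ [j]).length * f [] := by rw [List.length_append, List.length_singleton, pow_succ]; ring

section MarkovPartition

variable {d : ℕ} {Finv : ℝ → ℝ}

theorem branchComp_append (u v : List (Fin d)) :
    branchComp d Finv (u ++ v) = branchComp d Finv u ∘ branchComp d Finv v := by
  induction u with
  | nil => rfl
  | cons i u ih =>
    change (fun x => Finv (x + (i : ℝ))) ∘ branchComp d Finv (u ++ v) = _
    rw [ih]
    rfl

theorem monotone_branchComp (hmono : Monotone Finv) (w : List (Fin d)) :
    Monotone (branchComp d Finv w) := by
  induction w with
  | nil => exact monotone_id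
  | cons i w ih => exact fun a b hab => hmono ((add_le_add_iff_right _).mpr (ih hab))

theorem continuous_branchComp (hcont : Continuous Finv) (w : List (Fin d)) :
    Continuous (branchComp d Finv w) := by
  induction w with
  | nil => exact continuous_id
  | cons i w ih => exact hcont.comp (ih.add continuous_const)

variable (hmono : Monotone Finv) (hcont : Continuous Finv)
include hmono hcont

theorem cylLen_eq_sub (w : List (Fin d)) :
    cylLen d Finv w = branchComp d Finv w 1 - branchComp d Finv w 0 := by
  have h01 := monotone_branchComp hmono w zero_le_one
  rw [cylLen, cylInterval, (continuous_branchComp hcont w).continuousOn.image_Icc_of_monotoneOn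
    zero_le_one ((monotone_branchComp hmono w).monotoneOn _), csSup_Icc h01, csInf_Icc h01]

theorem cylLen_nonneg (w : List (Fin d)) : 0 ≤ cylLen d Finv w := by
  rw [cylLen_eq_sub hmono hcont]
  exact sub_nonneg.mpr (monotone_branchComp hmono w zero_le_one)

theorem cylLen_nil : cylLen d Finv [] = 1 := by
  rw [cylLen_eq_sub hmono hcont]
  norm_num [branchComp]

theorem sum_cylLen_append_singleton (h0 : Finv 0 = 0) (h1 : Finv d = 1) (u : List (Fin d)) :
    ∑ j : Fin d, cylLen d Finv (u ++ [j]) = cylLen d Finv u := by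
  set a : ℕ → ℝ := fun k => branchComp d Finv u (Finv k)
  have hchild (j : Fin d) : cylLen d Finv (u ++ [j]) = a (j + 1) - a j := by
    simp only [cylLen_eq_sub hmono hcont, branchComp_append, a]
    simp [branchComp, add_comm]
  rw [sum_congr rfl fun j _ => hchild j, Fin.sum_univ_eq_sum_range (fun k => a (k + 1) - a k),
    sum_range_sub, cylLen_eq_sub hmono hcont]
  simp [a, h0, h1, branchComp]

theorem cylLen_append_singleton_le (h0 : Finv 0 = 0) (h1 : Finv d = 1) (hd : 2 ≤ d) {C : ℝ}
    (hbg : ∀ w : List (Fin d), w ≠ [] → C * cylLen d Finv w.dropLast ≤ cylLen d Finv w)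
    (u : List (Fin d)) (j : Fin d) :
    cylLen d Finv (u ++ [j]) ≤ (1 - C) * cylLen d Finv u :=
  have : Nontrivial (Fin d) := Fin.nontrivial_iff_two_le.mpr hd
  le_one_sub_mul_of_sum_eq (fun _ => cylLen_nonneg hmono hcont _)
    (sum_cylLen_append_singleton hmono hcont h0 h1 u)
    (fun j => by simpa using hbg (u ++ [j]) (by simp)) j

end MarkovPartition

theorem stmt_7_general (d : ℕ) (hd : 2 ≤ d) (C : ℝ) (hC : 0 < C)
    (F Finv : ℝ → ℝ)
    (hFmono : StrictMono F)
    (hFper : ∀ x, F (x + 1) = F x + d) (hF0 : F 0 = 0)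
    (hFinv₁ : ∀ x, Finv (F x) = x) (hFinv₂ : ∀ x, F (Finv x) = x)
    (hbg : ∀ w : List (Fin d), w ≠ [] →
      C * cylLen d Finv w.dropLast ≤ cylLen d Finv w) :
    ∃ D > (0 : ℝ), ∃ τ : ℝ, 0 < τ ∧ τ < 1 ∧
      ∀ n : ℕ, 1 ≤ n → ∀ w : List (Fin d), w.length = n →
        cylLen d Finv w ≤ D * τ ^ n := by
  have hmono : Monotone Finv := fun a b hab => by rwa [← hFmono.le_iff_le, hFinv₂, hFinv₂]
  have hcont : Continuous Finv := hmono.continuous_of_surjective fun x => ⟨F x, hFinv₁ x⟩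
  have h0 : Finv 0 = 0 := by simpa [hF0] using hFinv₁ 0
  have h1 : Finv d = 1 := by
    have hF1 : F 1 = d := by simpa [hF0] using hFper 0
    rw [← hF1, hFinv₁]
  set τ := max (1 - C) (1 / 2)
  have hstep (u : List (Fin d)) (j : Fin d) : cylLen d Finv (u ++ [j]) ≤ τ * cylLen d Finv u :=
    (cylLen_append_singleton_le hmono hcont h0 h1 hd hbg u j).trans
      (mul_le_mul_of_nonneg_right (le_max_left _ _) (cylLen_nonneg hmono hcont u))
  refine ⟨1, one_pos, τ, by positivity, max_lt (by linarith) (by norm_num), fun n _ w hw => ?_⟩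
  simpa [hw, cylLen_nil hmono hcont] using
    le_pow_length_mul_of_append_singleton (by positivity) hstep w

/-- bounded geometry (`|I_{κ_n}| ≥ C |I_{σ⁻κ_n}|`) of the nested
Markov partitions of a circle endomorphism of degree `d ≥ 2` implies exponential
decay `ε_n ≤ D τⁿ` of the maximal interval length. -/
theorem stmt_7 (d : ℕ) (hd : 2 ≤ d) (C : ℝ) (hC : 0 < C)
    (F Finv : ℝ → ℝ)
    (hFcont : Continuous F) (hFmono : StrictMono F) (hFbij : Function.Bijective F)
    (hFper : ∀ x, F (x + 1) = F x + d) (hF0 : F 0 = 0)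
    (hFinv₁ : ∀ x, Finv (F x) = x) (hFinv₂ : ∀ x, F (Finv x) = x)
    (hbg : ∀ w : List (Fin d), w ≠ [] →
      C * cylLen d Finv w.dropLast ≤ cylLen d Finv w) :
    ∃ D > (0 : ℝ), ∃ τ : ℝ, 0 < τ ∧ τ < 1 ∧
      ∀ n : ℕ, 1 ≤ n → ∀ w : List (Fin d), w.length = n →
        cylLen d Finv w ≤ D * τ ^ n :=
  stmt_7_general d hd C hC F Finv hFmono hFper hF0 hFinv₁ hFinv₂ hbg
end

section
/- Let h be a quasisymmetric homeomorphism of the circle whose lift H satisfies K^{-1} ≤ (H(x+t) - H(x))/(H(x) - H(x-t)) ≤ K for all x ∈ ℝ, t > 0. If f and g are circle endomorphisms of the same degree d with g ∘ h = h ∘ f and g is C^1 with g' continuous at a fixed point q = h(p) of g where p is a fixed point of f with f differentiable at p, and if h is symmetric (the quasisymmetry constant tends to 1 as t → 0), then the eigenvalues agree along periodic orbits in the following basic instance: if p is a fixed point of f and the one-sided limits e_f = lim_{t→0^+}(F(x_p + t) - x_p)/t and e_g exist with e_f, e_g > 1, then e_f = e_g. -/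
open Filter Set Topology

/-!
Symmetry says that the increments of `H` over adjacent intervals of equal length `t` have
ratio tending to `1` as `t → 0⁺`, uniformly in the position. Multiplying these ratios along a
chain of adjacent intervals makes all increments of the chain asymptotically equal, and summing
them shows that `H` is asymptotically linear at every point `x`:
`(H (x + a t) - H x) / (H (x + t) - H x) → a` for every `a > 0` (first for `a ∈ ℕ`, then for
`a = n / m`, then by monotonicity for real `a`). Since `F (x + t) - x ≈ e_f t` at the fixed
point `x`, `(H (F (x + t)) - H x) / (H (x + t) - H x) → e_f`. By the conjugacy
this quotient is `(G (H x + u) - H x) / u` with `u = H (x + t) - H x → 0⁺`, so it also tends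
to `e_g`.
-/

def IsSymmetric (H : ℝ → ℝ) : Prop :=
  ∃ ε : ℝ → ℝ, Tendsto ε (𝓝[>] 0) (𝓝 0) ∧ ∀ x : ℝ, ∀ t > (0 : ℝ),
    1 - ε t ≤ (H (x + t) - H x) / (H x - H (x - t)) ∧
    (H (x + t) - H x) / (H x - H (x - t)) ≤ 1 + ε t

theorem exists_nat_div_btwn {a b : ℝ} (ha : 0 ≤ a) (hab : a < b) :
    ∃ n m : ℕ, 0 < m ∧ a < n / m ∧ (n : ℝ) / m < b := by
  obtain ⟨q, haq, hqb⟩ := exists_rat_btwn hab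
  have hq : ((q.num.toNat : ℕ) : ℝ) / q.den = q := by
    rw [Rat.cast_def]
    congr
    exact_mod_cast Int.toNat_of_nonneg (Rat.num_nonneg.2 (by exact_mod_cast (ha.trans haq.le)))
  exact ⟨q.num.toNat, q.den, q.pos, hq ▸ haq, hq ▸ hqb⟩

theorem tendsto_div_const_nhdsGT_zero {m : ℝ} (hm : 0 < m) :
    Tendsto (fun t : ℝ => t / m) (𝓝[>] 0) (𝓝[>] 0) := by
  refine tendsto_nhdsWithin_of_tendsto_nhds_of_eventually_within _ ?_ ?_
  · exact ((continuous_id.div_const m).tendsto' 0 0 (zero_div m)).mono_left nhdsWithin_le_nhds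
  · filter_upwards [self_mem_nhdsWithin] with t ht using div_pos ht hm

namespace IsSymmetric

variable {H : ℝ → ℝ}

theorem tendsto_ratio_comp (hsym : IsSymmetric H) (φ : ℝ → ℝ) :
    Tendsto (fun t => (H (φ t + t) - H (φ t)) / (H (φ t) - H (φ t - t)))
      (𝓝[>] 0) (𝓝 1) := by
  obtain ⟨ε, hε, hbound⟩ := hsym
  refine tendsto_of_tendsto_of_tendsto_of_le_of_le'
    (by simpa using tendsto_const_nhds.sub hε) (by simpa using tendsto_const_nhds.add hε) ?_ ?_
  · filter_upwards [self_mem_nhdsWithin] with t ht using (hbound _ t ht).1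
  · filter_upwards [self_mem_nhdsWithin] with t ht using (hbound _ t ht).2

theorem tendsto_increment_ratio (hsym : IsSymmetric H) (hH : StrictMono H) (x : ℝ) (k : ℕ) :
    Tendsto (fun t => (H (x + ↑(k + 1) * t) - H (x + k * t)) / (H (x + t) - H x))
      (𝓝[>] 0) (𝓝 1) := by
  induction k with
  | zero =>
    refine tendsto_const_nhds.congr' ?_
    filter_upwards [self_mem_nhdsWithin] with t ht
    have hpos : 0 < H (x + t) - H x := sub_pos.2 (hH (lt_add_of_pos_right x ht))
    simp [hpos.ne']
  | succ k ih =>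
    have h := (hsym.tendsto_ratio_comp fun t => x + ↑(k + 1) * t).mul ih
    rw [one_mul] at h
    refine h.congr' ?_
    filter_upwards [self_mem_nhdsWithin] with t (ht : 0 < t)
    have hnext : x + ↑(k + 1) * t + t = x + ↑(k + 1 + 1) * t := by push_cast; ring
    have hprev : x + ↑(k + 1) * t - t = x + k * t := by push_cast; ring
    have hpos : 0 < H (x + ↑(k + 1) * t) - H (x + k * t) :=
      sub_pos.2 (hH (by push_cast; linarith))
    rw [hnext, hprev, div_mul_div_cancel₀ hpos.ne']

theorem tendsto_nat_mul_ratio (hsym : IsSymmetric H) (hH : StrictMono H) (x : ℝ) (n : ℕ) :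
    Tendsto (fun t => (H (x + n * t) - H x) / (H (x + t) - H x)) (𝓝[>] 0) (𝓝 n) := by
  have h := tendsto_finsetSum (Finset.range n) fun k _ => hsym.tendsto_increment_ratio hH x k
  rw [Finset.sum_const, Finset.card_range, nsmul_one] at h
  refine h.congr fun t => ?_
  rw [← Finset.sum_div, Finset.sum_range_sub (fun k : ℕ => H (x + k * t))]
  simp

theorem tendsto_nat_div_mul_ratio (hsym : IsSymmetric H) (hH : StrictMono H) (x : ℝ)
    (n : ℕ) {m : ℕ} (hm : 0 < m) :
    Tendsto (fun t => (H (x + n / m * t) - H x) / (H (x + t) - H x))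
      (𝓝[>] 0) (𝓝 ((n : ℝ) / m)) := by
  have hm' : (0 : ℝ) < m := Nat.cast_pos.2 hm
  have h := ((hsym.tendsto_nat_mul_ratio hH x n).div (hsym.tendsto_nat_mul_ratio hH x m)
    hm'.ne').comp (tendsto_div_const_nhdsGT_zero hm')
  refine h.congr' ?_
  filter_upwards [self_mem_nhdsWithin] with t (ht : 0 < t)
  have hpos : 0 < H (x + t / m) - H x := sub_pos.2 (hH (lt_add_of_pos_right x (div_pos ht hm')))
  simp only [Function.comp_apply, Pi.div_apply]
  rw [div_div_div_cancel_right₀ hpos.ne', mul_div_cancel₀ t hm'.ne', div_mul_eq_mul_div,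
    mul_div_assoc]

theorem tendsto_ratio_of_tendsto_div (hsym : IsSymmetric H) (hH : StrictMono H) (x : ℝ)
    {s : ℝ → ℝ} {a : ℝ} (ha : 0 < a)
    (hs : Tendsto (fun t => s t / t) (𝓝[>] 0) (𝓝 a)) :
    Tendsto (fun t => (H (x + s t) - H x) / (H (x + t) - H x)) (𝓝[>] 0) (𝓝 a) := by
  have ratio_mono : ∀ t > 0, ∀ u v : ℝ, u ≤ v →
      (H (x + u) - H x) / (H (x + t) - H x) ≤ (H (x + v) - H x) / (H (x + t) - H x) :=
    fun t ht u v huv => div_le_div_of_nonneg_right (sub_le_sub_right (hH.monotone (by linarith)) _)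
      (sub_pos.2 (hH (lt_add_of_pos_right x ht))).le
  rw [tendsto_order]
  constructor
  · intro b hb
    obtain ⟨n, m, hm, hbq, hqa⟩ := exists_nat_div_btwn (le_max_right b 0) (max_lt hb ha)
    filter_upwards [self_mem_nhdsWithin, hs.eventually (lt_mem_nhds hqa),
      (hsym.tendsto_nat_div_mul_ratio hH x n hm).eventually
        (lt_mem_nhds ((le_max_left b 0).trans_lt hbq))]
      with t (ht : 0 < t) hqs hbr
    exact hbr.trans_le (ratio_mono t ht _ _ ((lt_div_iff₀ ht).1 hqs).le)
  · intro c hc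
    obtain ⟨n, m, hm, haq, hqc⟩ := exists_nat_div_btwn ha.le hc
    filter_upwards [self_mem_nhdsWithin, hs.eventually (gt_mem_nhds haq),
      (hsym.tendsto_nat_div_mul_ratio hH x n hm).eventually (gt_mem_nhds hqc)]
      with t (ht : 0 < t) hsq hrc
    exact (ratio_mono t ht _ _ ((div_lt_iff₀ ht).1 hsq).le).trans_lt hrc

end IsSymmetric

theorem stmt_17_general
    (F G H : ℝ → ℝ)
    (hHcont : Continuous H) (hHmono : StrictMono H)
    (ε : ℝ → ℝ)
    (hε : Tendsto ε (nhdsWithin 0 (Ioi 0)) (nhds 0))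
    (hsym : ∀ x : ℝ, ∀ t > (0 : ℝ),
      1 - ε t ≤ (H (x + t) - H x) / (H x - H (x - t)) ∧
      (H (x + t) - H x) / (H x - H (x - t)) ≤ 1 + ε t)
    (hconj : ∀ x, G (H x) = H (F x))
    (xp : ℝ)
    (ef eg : ℝ) (hef1 : 1 < ef)
    (hef : Tendsto (fun t => (F (xp + t) - xp) / t)
      (nhdsWithin 0 (Ioi 0)) (nhds ef))
    (heg : Tendsto (fun t => (G (H xp + t) - H xp) / t)
      (nhdsWithin 0 (Ioi 0)) (nhds eg)) :
    ef = eg := by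
  have hF : Tendsto (fun t => (H (F (xp + t)) - H xp) / (H (xp + t) - H xp))
      (𝓝[>] 0) (𝓝 ef) := by
    simpa using IsSymmetric.tendsto_ratio_of_tendsto_div ⟨ε, hε, hsym⟩ hHmono xp
      (zero_lt_one.trans hef1) hef
  have hH : Tendsto (fun t => H (xp + t) - H xp) (𝓝[>] 0) (𝓝[>] 0) := by
    refine tendsto_nhdsWithin_of_tendsto_nhds_of_eventually_within _ ?_ ?_
    · have hc : Continuous fun t => H (xp + t) - H xp := by fun_prop
      exact (hc.tendsto' 0 0 (by simp)).mono_left nhdsWithin_le_nhds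
    · filter_upwards [self_mem_nhdsWithin] with t ht
      exact sub_pos.2 (hHmono (lt_add_of_pos_right xp ht))
  have hG : Tendsto (fun t => (H (F (xp + t)) - H xp) / (H (xp + t) - H xp))
      (𝓝[>] 0) (𝓝 eg) := by
    simpa [Function.comp_def, hconj] using heg.comp hH
  exact tendsto_nhds_unique hF hG

/-- if a symmetric homeomorphism `h` (with lift `H`) conjugates the
circle endomorphisms `f` and `g` (`g ∘ h = h ∘ f`), `p` is a fixed point of `f` with
`q = h(p)` fixed by `g`, and the one-sided eigenvalue limits
`e_f = lim_{t→0⁺} (F(x_p+t) - x_p)/t` and `e_g = lim_{t→0⁺} (G(y_p+t) - y_p)/t`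
exist with `e_f, e_g > 1`, then `e_f = e_g`. -/
theorem stmt_17 (d : ℕ) (hd : 2 ≤ d)
    (F G H : ℝ → ℝ)
    (hFcont : Continuous F) (hFmono : StrictMono F)
    (hFper : ∀ x, F (x + 1) = F x + d)
    (hGcont : Continuous G) (hGmono : StrictMono G)
    (hGper : ∀ x, G (x + 1) = G x + d)
    (hHcont : Continuous H) (hHmono : StrictMono H)
    (hHbij : Function.Bijective H)
    (hHper : ∀ x, H (x + 1) = H x + 1)
    (ε : ℝ → ℝ)
    (hε : Tendsto ε (nhdsWithin 0 (Ioi 0)) (nhds 0))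
    (hsym : ∀ x : ℝ, ∀ t > (0 : ℝ),
      1 - ε t ≤ (H (x + t) - H x) / (H x - H (x - t)) ∧
      (H (x + t) - H x) / (H x - H (x - t)) ≤ 1 + ε t)
    (hconj : ∀ x, G (H x) = H (F x))
    (xp : ℝ) (hxp : F xp = xp)
    (ef eg : ℝ) (hef1 : 1 < ef) (heg1 : 1 < eg)
    (hef : Tendsto (fun t => (F (xp + t) - xp) / t)
      (nhdsWithin 0 (Ioi 0)) (nhds ef))
    (heg : Tendsto (fun t => (G (H xp + t) - H xp) / t)
      (nhdsWithin 0 (Ioi 0)) (nhds eg)) :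
    ef = eg :=
  stmt_17_general F G H hHcont hHmono ε hε hsym hconj xp ef eg hef1 hef heg
end
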